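/- arXiv:1812.07399 — 4 statements merged into one kernel-verified Lean document; each statement's English description precedes it below -/
import Mathlib

section
/- Let z ∈ ℝ², let X_z = {x₁,…,x_N} ⊂ ℝ², and let w = ((w_{1,1},w_{1,2}),…,(w_{N,1},w_{N,2})) be vector weights such that the vector formula ∇̂f(z) := ∑ⱼ (w_{j,1} f(xⱼ), w_{j,2} f(xⱼ)) is exact for the gradient on affine functions: ∑ⱼ wⱼ p(xⱼ) = ∇p(z) for all affine p : ℝ² → ℝ. If f is Lipschitz with constant L on a set Ω containing z and all xⱼ (i.e., |f|_{0,1,Ω} ≤ L), and all segments [z,xⱼ] lie in Ω, then the fault indicator I_∇(z, X_z) := ‖∇̂f(z)‖₂ / ‖∑ⱼ |wⱼ| ‖xⱼ − z‖₂‖₂ satisfies I_∇(z, X_z) ≤ L, where |wⱼ| := (|w_{j,1}|, |w_{j,2}|) and the denominator is the Euclidean norm of the vector ∑ⱼ (|w_{j,1}|, |w_{j,2}|) ‖xⱼ − z‖₂ (assumed nonzero). -/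
open Finset

/-! Exactness on constants forces each component of the weights to sum to zero, so every
component of `∇̂f(z)` equals `∑ⱼ w_{j,m} (f(xⱼ) - f(z))`, which the Lipschitz bound controls
by `L ∑ⱼ |w_{j,m}| ‖xⱼ - z‖`. Componentwise domination passes to the Euclidean norm. -/

theorem EuclideanSpace.norm_le_norm_of_forall_norm_le {𝕜 ι : Type*} [RCLike 𝕜] [Fintype ι]
    {u v : EuclideanSpace 𝕜 ι} (h : ∀ i, ‖u i‖ ≤ ‖v i‖) : ‖u‖ ≤ ‖v‖ := by
  rw [EuclideanSpace.norm_eq, EuclideanSpace.norm_eq]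
  gcongr with i
  exact h i

theorem abs_sum_mul_le_of_sum_eq_zero {ι : Type*} (s : Finset ι) (w g d : ι → ℝ) (c L : ℝ)
    (hw : ∑ j ∈ s, w j = 0) (hg : ∀ j ∈ s, |g j - c| ≤ L * d j) :
    |∑ j ∈ s, w j * g j| ≤ L * ∑ j ∈ s, |w j| * d j := by
  have hcentre : ∑ j ∈ s, w j * g j = ∑ j ∈ s, w j * (g j - c) := by
    simp only [mul_sub, sum_sub_distrib, ← sum_mul, hw, zero_mul, sub_zero]
  calc |∑ j ∈ s, w j * g j| = |∑ j ∈ s, w j * (g j - c)| := by rw [hcentre]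
    _ ≤ ∑ j ∈ s, |w j| * |g j - c| := by
      simpa only [abs_mul] using abs_sum_le_sum_abs (fun j => w j * (g j - c)) s
    _ ≤ ∑ j ∈ s, |w j| * (L * d j) := by gcongr with j hj; exact hg j hj
    _ = L * ∑ j ∈ s, |w j| * d j := by rw [mul_sum]; congr 1 with j; ring

theorem stmt_6_general {N : ℕ} (z : EuclideanSpace ℝ (Fin 2)) (x : Fin N → EuclideanSpace ℝ (Fin 2))
    (w : Fin N → EuclideanSpace ℝ (Fin 2)) (f : EuclideanSpace ℝ (Fin 2) → ℝ)
    (Ω : Set (EuclideanSpace ℝ (Fin 2))) (hz : z ∈ Ω) (hx : ∀ j, x j ∈ Ω)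
    (L : ℝ) (hL : 0 ≤ L) (hLip : ∀ u ∈ Ω, ∀ v ∈ Ω, |f u - f v| ≤ L * ‖u - v‖)
    (hexact : ∀ a : ℝ, ∀ b : Fin 2 → ℝ, ∀ m : Fin 2,
      ∑ j, w j m * (a + b 0 * x j 0 + b 1 * x j 1) = b m)
    (num den : EuclideanSpace ℝ (Fin 2))
    (hnum : ∀ m, num m = ∑ j, w j m * f (x j))
    (hden : ∀ m, den m = ∑ j, |w j m| * ‖x j - z‖) :
    ‖num‖ / ‖den‖ ≤ L := by
  have hsum_zero (m : Fin 2) : ∑ j, w j m = 0 := by simpa using hexact 1 0 m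
  have hcomp (m : Fin 2) : |num m| ≤ L * den m := by
    rw [hnum, hden]
    exact abs_sum_mul_le_of_sum_eq_zero _ _ _ _ (f z) L (hsum_zero m)
      fun j _ => hLip _ (hx j) z hz
  have hnorm : ‖num‖ ≤ L * ‖den‖ := by
    rw [← Real.norm_of_nonneg hL, ← norm_smul]
    refine EuclideanSpace.norm_le_norm_of_forall_norm_le fun m => ?_
    simpa only [Real.norm_eq_abs, PiLp.smul_apply, smul_eq_mul] using
      (hcomp m).trans (le_abs_self _)
  exact div_le_of_le_mul₀ (norm_nonneg _) hL hnorm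

/-- the fault indicator `I_∇(z,X_z) = ‖∇̂f(z)‖₂ / ‖∑ⱼ |wⱼ| ‖xⱼ−z‖₂‖₂` is
bounded by the Lipschitz constant `L` of `f` on `Ω`, when the vector weights are exact
for the gradient on affine functions. -/
theorem stmt_6 {N : ℕ} (z : EuclideanSpace ℝ (Fin 2)) (x : Fin N → EuclideanSpace ℝ (Fin 2))
    (w : Fin N → EuclideanSpace ℝ (Fin 2)) (f : EuclideanSpace ℝ (Fin 2) → ℝ)
    (Ω : Set (EuclideanSpace ℝ (Fin 2))) (hz : z ∈ Ω) (hx : ∀ j, x j ∈ Ω)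
    (hseg : ∀ j, segment ℝ z (x j) ⊆ Ω)
    (L : ℝ) (hL : 0 ≤ L) (hLip : ∀ u ∈ Ω, ∀ v ∈ Ω, |f u - f v| ≤ L * ‖u - v‖)
    (hexact : ∀ a : ℝ, ∀ b : Fin 2 → ℝ, ∀ m : Fin 2,
      ∑ j, w j m * (a + b 0 * x j 0 + b 1 * x j 1) = b m)
    (num den : EuclideanSpace ℝ (Fin 2))
    (hnum : ∀ m, num m = ∑ j, w j m * f (x j))
    (hden : ∀ m, den m = ∑ j, |w j m| * ‖x j - z‖)
    (hden0 : ‖den‖ ≠ 0) :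
    ‖num‖ / ‖den‖ ≤ L :=
  stmt_6_general z x w f Ω hz hx L hL hLip hexact num den hnum hden
end

section
/- Let z ∈ ℝ², x₁,…,x_N ∈ ℝ² \ {z}, s > 0, and let λ be a linear functional on affine polynomials. Suppose w* minimizes |w|_{2,s}² = ∑ᵢ wᵢ² ‖xᵢ − z‖₂^{2s} subject to ∑ᵢ wᵢ p(xᵢ) = λ(p) for all affine p. If the centers and target are rescaled by h > 0 via yᵢ = z + h(xᵢ − z) and the functional λ_h(p) := λ(p ∘ T_h) / h^k where T_h(x) = z + h(x − z) and λ is h^k-homogeneous under this substitution (as holds when λ(p) = Dp(z) for D homogeneous of order k with constant coefficients), then the minimizer for the rescaled problem is wᵢ* / h^k. That is, ℓ₂-minimal numerical differentiation formulas are scalable. -/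
/-! The homothety `T_h x = z + h (x − z)` acts on affine polynomials by `p ↦ p ∘ T_h`, an
invertible substitution of coefficients for `h ≠ 0`. Hence `w` is exact for `λ_h` at the centers
`T_h xᵢ` iff `h^k w` is exact for `λ` at the centers `xᵢ`, while
`‖T_h xᵢ − z‖ = h ‖xᵢ − z‖` multiplies the objective by the positive constant `h^{2s}`.
Minimisers therefore correspond under `w ↦ w / h^k`. -/

open Finset Function

section AffineExactness

variable {ι : Type*} [Fintype ι] {n : ℕ}

def affineEval (c : ℝ × (Fin n → ℝ)) (p : EuclideanSpace ℝ (Fin n)) : ℝ :=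
  c.1 + ∑ j, c.2 j * p j

def IsExactFor (x : ι → EuclideanSpace ℝ (Fin n)) (L : ℝ × (Fin n → ℝ) → ℝ) (w : ι → ℝ) :
    Prop :=
  ∀ c, ∑ i, w i * affineEval c (x i) = L c

/-- The coefficients of `p ∘ T_h`, where `p` has coefficients `c` and `T_h x = z + h (x − z)`. -/
def precompHomothety (z : EuclideanSpace ℝ (Fin n)) (h : ℝ) (c : ℝ × (Fin n → ℝ)) :
    ℝ × (Fin n → ℝ) :=
  (c.1 + (1 - h) * ∑ j, c.2 j * z j, h • c.2)

theorem affineEval_homothety (c : ℝ × (Fin n → ℝ)) (z x : EuclideanSpace ℝ (Fin n)) (h : ℝ) :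
    affineEval c (z + h • (x - z)) = affineEval (precompHomothety z h c) x := by
  simp only [affineEval, precompHomothety, PiLp.add_apply, PiLp.smul_apply, PiLp.sub_apply,
    Pi.smul_apply, smul_eq_mul, mul_sum, add_assoc, ← sum_add_distrib]
  exact congrArg _ (sum_congr rfl fun j _ ↦ by ring)

theorem precompHomothety_surjective (z : EuclideanSpace ℝ (Fin n)) {h : ℝ} (hh : h ≠ 0) :
    Surjective (precompHomothety z h) := by
  rintro ⟨a, b⟩
  refine ⟨(a - (1 - h) * ∑ j, h⁻¹ * b j * z j, h⁻¹ • b), ?_⟩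
  simp only [precompHomothety, Pi.smul_apply, smul_eq_mul, smul_inv_smul₀ hh]
  ring_nf

theorem isExactFor_homothety_iff {x : ι → EuclideanSpace ℝ (Fin n)}
    {z : EuclideanSpace ℝ (Fin n)} {L : ℝ × (Fin n → ℝ) → ℝ} {w : ι → ℝ} {h : ℝ} (hh : h ≠ 0)
    (k : ℕ) :
    IsExactFor (fun i ↦ z + h • (x i - z)) (fun c ↦ L (precompHomothety z h c) / h ^ k) w ↔
      IsExactFor x L (h ^ k • w) := by
  have hk : h ^ k ≠ 0 := pow_ne_zero k hh
  unfold IsExactFor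
  conv_rhs => rw [(precompHomothety_surjective z hh).forall]
  refine forall_congr' fun c ↦ ?_
  simp only [affineEval_homothety, Pi.smul_apply, smul_eq_mul, mul_assoc, ← mul_sum]
  rw [eq_div_iff hk, mul_comm]

theorem isExactFor_fin_two_iff {x : ι → EuclideanSpace ℝ (Fin 2)} {L : ℝ × (Fin 2 → ℝ) → ℝ}
    {w : ι → ℝ} :
    IsExactFor x L w ↔ ∀ a b, ∑ i, w i * (a + b 0 * x i 0 + b 1 * x i 1) = L (a, b) := by
  simp only [IsExactFor, Prod.forall, affineEval, Fin.sum_univ_two, add_assoc]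

end AffineExactness

section WeightedSqNorm

variable {ι : Type*} [Fintype ι] {E : Type*} [SeminormedAddCommGroup E]

noncomputable def weightedSqNorm (s : ℝ) (z : E) (x : ι → E) (w : ι → ℝ) : ℝ :=
  ∑ i, w i ^ 2 * ‖x i - z‖ ^ (2 * s)

theorem weightedSqNorm_smul (s : ℝ) (z : E) (x : ι → E) (c : ℝ) (w : ι → ℝ) :
    weightedSqNorm s z x (c • w) = c ^ 2 * weightedSqNorm s z x w := by
  simp only [weightedSqNorm, Pi.smul_apply, smul_eq_mul, mul_sum, mul_pow, mul_assoc]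

theorem weightedSqNorm_homothety [NormedSpace ℝ E] (s : ℝ) (z : E) (x : ι → E) {h : ℝ}
    (hh : 0 ≤ h) (w : ι → ℝ) :
    weightedSqNorm s z (fun i ↦ z + h • (x i - z)) w = h ^ (2 * s) * weightedSqNorm s z x w := by
  simp only [weightedSqNorm, add_sub_cancel_left, norm_smul, Real.norm_of_nonneg hh,
    Real.mul_rpow hh (norm_nonneg _), mul_sum]
  exact sum_congr rfl fun i _ ↦ by ring

end WeightedSqNorm

theorem isMinOn_weightedSqNorm_homothety {ι : Type*} [Fintype ι] {n : ℕ}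
    {x : ι → EuclideanSpace ℝ (Fin n)} {z : EuclideanSpace ℝ (Fin n)} {L : ℝ × (Fin n → ℝ) → ℝ}
    {wstar : ι → ℝ} {s h : ℝ} (hh : 0 < h) (k : ℕ) (hfeas : IsExactFor x L wstar)
    (hmin : IsMinOn (weightedSqNorm s z x) {w | IsExactFor x L w} wstar) :
    let y := fun i ↦ z + h • (x i - z)
    let S := {w | IsExactFor y (fun c ↦ L (precompHomothety z h c) / h ^ k) w}
    (h ^ k)⁻¹ • wstar ∈ S ∧ IsMinOn (weightedSqNorm s z y) S ((h ^ k)⁻¹ • wstar) := by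
  intro y S
  have hk : h ^ k ≠ 0 := pow_ne_zero k hh.ne'
  have hS : ∀ w, w ∈ S ↔ IsExactFor x L (h ^ k • w) := fun w ↦ isExactFor_homothety_iff hh.ne' k
  refine ⟨(hS _).2 (by rwa [smul_inv_smul₀ hk]), isMinOn_iff.2 fun w hw ↦ ?_⟩
  have hle := isMinOn_iff.1 hmin _ ((hS w).1 hw)
  rw [weightedSqNorm_smul] at hle
  calc weightedSqNorm s z y ((h ^ k)⁻¹ • wstar)
      = h ^ (2 * s) * ((h ^ k)⁻¹ ^ 2 * weightedSqNorm s z x wstar) := by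
        rw [weightedSqNorm_homothety s z x hh.le, weightedSqNorm_smul]
    _ ≤ h ^ (2 * s) * ((h ^ k)⁻¹ ^ 2 * ((h ^ k) ^ 2 * weightedSqNorm s z x w)) := by
        gcongr
    _ = weightedSqNorm s z y w := by
        rw [weightedSqNorm_homothety s z x hh.le, ← mul_assoc ((h ^ k)⁻¹ ^ 2), ← mul_pow,
          inv_mul_cancel₀ hk, one_pow, one_mul]

/-- Affine polynomials `x ↦ a + b 0 * x 0 + b 1 * x 1` are encoded by their coefficients
`(a, b)`, on which `lam` and `lamh` act. -/
theorem stmt_11_general {N : ℕ} (z : EuclideanSpace ℝ (Fin 2)) (x : Fin N → EuclideanSpace ℝ (Fin 2))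
    (s : ℝ) (k : ℕ)
    (lam : (ℝ × (Fin 2 → ℝ)) →ₗ[ℝ] ℝ)
    (h : ℝ) (hh : 0 < h)
    (y : Fin N → EuclideanSpace ℝ (Fin 2)) (hy : ∀ i, y i = z + h • (x i - z))
    (lamh : ℝ → (Fin 2 → ℝ) → ℝ)
    (hlamh : ∀ a b, lamh a b = lam (a + (1 - h) * (b 0 * z 0 + b 1 * z 1), h • b) / h ^ k)
    (wstar : Fin N → ℝ)
    (hfeas : ∀ a : ℝ, ∀ b : Fin 2 → ℝ,
      ∑ i, wstar i * (a + b 0 * x i 0 + b 1 * x i 1) = lam (a, b))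
    (hmin : ∀ w : Fin N → ℝ,
      (∀ a : ℝ, ∀ b : Fin 2 → ℝ, ∑ i, w i * (a + b 0 * x i 0 + b 1 * x i 1) = lam (a, b)) →
      ∑ i, wstar i ^ 2 * ‖x i - z‖ ^ (2 * s) ≤ ∑ i, w i ^ 2 * ‖x i - z‖ ^ (2 * s)) :
    (∀ a : ℝ, ∀ b : Fin 2 → ℝ,
      ∑ i, (wstar i / h ^ k) * (a + b 0 * y i 0 + b 1 * y i 1) = lamh a b) ∧
    (∀ w : Fin N → ℝ,
      (∀ a : ℝ, ∀ b : Fin 2 → ℝ, ∑ i, w i * (a + b 0 * y i 0 + b 1 * y i 1) = lamh a b) →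
      ∑ i, (wstar i / h ^ k) ^ 2 * ‖y i - z‖ ^ (2 * s) ≤
        ∑ i, w i ^ 2 * ‖y i - z‖ ^ (2 * s)) := by
  have hy' : (fun i ↦ z + h • (x i - z)) = y := (funext hy).symm
  have hlamh' : (fun c ↦ lam (precompHomothety z h c) / h ^ k) = uncurry lamh := by
    funext ⟨a, b⟩
    simp only [hlamh, precompHomothety, Fin.sum_univ_two, uncurry_apply_pair]
  have hscaled : (h ^ k)⁻¹ • wstar = fun i ↦ wstar i / h ^ k := by
    funext i
    simp only [Pi.smul_apply, smul_eq_mul, inv_mul_eq_div]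
  obtain ⟨hfeas', hmin'⟩ := isMinOn_weightedSqNorm_homothety (s := s) hh k
    (isExactFor_fin_two_iff.2 hfeas) (isMinOn_iff.2 fun w hw ↦ hmin w (isExactFor_fin_two_iff.1 hw))
  simp only [hy', hlamh', hscaled] at hfeas' hmin'
  exact ⟨isExactFor_fin_two_iff.1 hfeas',
    fun w hw ↦ isMinOn_iff.1 hmin' w (isExactFor_fin_two_iff.2 hw)⟩

/-- scalability of ℓ₂-minimal numerical differentiation formulas. An affine
polynomial is encoded by its coefficients `(a, b)`, i.e. `p(x) = a + b 0 * x 0 + b 1 * x 1`,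
and the linear functional `λ` on affine polynomials acts on these coefficients. Under the
rescaling `yᵢ = z + h(xᵢ − z)` and `λ_h(p) := λ(p ∘ T_h)/h^k` (with
`p ∘ T_h` having coefficients `(a + (1−h)(b·z), h b)`), if `w*` minimizes
`∑ wᵢ² ‖xᵢ−z‖^{2s}` subject to exactness for `λ`, then `w*/h^k` minimizes
`∑ wᵢ² ‖yᵢ−z‖^{2s}` subject to exactness for `λ_h` with centers `yᵢ`. -/
theorem stmt_11 {N : ℕ} (z : EuclideanSpace ℝ (Fin 2)) (x : Fin N → EuclideanSpace ℝ (Fin 2))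
    (hxz : ∀ i, x i ≠ z) (s : ℝ) (hs : 0 < s) (k : ℕ)
    (lam : (ℝ × (Fin 2 → ℝ)) →ₗ[ℝ] ℝ)
    (h : ℝ) (hh : 0 < h)
    (y : Fin N → EuclideanSpace ℝ (Fin 2)) (hy : ∀ i, y i = z + h • (x i - z))
    (lamh : ℝ → (Fin 2 → ℝ) → ℝ)
    (hlamh : ∀ a b, lamh a b = lam (a + (1 - h) * (b 0 * z 0 + b 1 * z 1), h • b) / h ^ k)
    (hhom : ∀ a b, lamh a b = lam (a, b))  -- λ is h^k-homogeneous under the substitution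
    (wstar : Fin N → ℝ)
    (hfeas : ∀ a : ℝ, ∀ b : Fin 2 → ℝ,
      ∑ i, wstar i * (a + b 0 * x i 0 + b 1 * x i 1) = lam (a, b))
    (hmin : ∀ w : Fin N → ℝ,
      (∀ a : ℝ, ∀ b : Fin 2 → ℝ, ∑ i, w i * (a + b 0 * x i 0 + b 1 * x i 1) = lam (a, b)) →
      ∑ i, wstar i ^ 2 * ‖x i - z‖ ^ (2 * s) ≤ ∑ i, w i ^ 2 * ‖x i - z‖ ^ (2 * s)) :
    (∀ a : ℝ, ∀ b : Fin 2 → ℝ,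
      ∑ i, (wstar i / h ^ k) * (a + b 0 * y i 0 + b 1 * y i 1) = lamh a b) ∧
    (∀ w : Fin N → ℝ,
      (∀ a : ℝ, ∀ b : Fin 2 → ℝ, ∑ i, w i * (a + b 0 * y i 0 + b 1 * y i 1) = lamh a b) →
      ∑ i, (wstar i / h ^ k) ^ 2 * ‖y i - z‖ ^ (2 * s) ≤
        ∑ i, w i ^ 2 * ‖y i - z‖ ^ (2 * s)) :=
  stmt_11_general z x s k lam h hh y hy lamh hlamh wstar hfeas hmin
end

section
/- Let f : Ω → ℝ with Ω ⊂ ℝ², let r ≥ 1, γ ∈ (0,1], and suppose f is r times continuously differentiable on the convex set Ω with all r-th order partials in C^{0,γ}(Ω). Let z ∈ Ω and let T_{q}f(·; z) denote the Taylor polynomial of f at z of degree r. Then for every x ∈ Ω, |f(x) − T_r f(x; z)| ≤ |f|_{r,γ,Ω} ‖x − z‖₂^{r+γ}, where |f|_{r,γ,Ω} := (1/((γ+1)⋯(γ+r))) (∑_{|α|=r} binom(r,α) |∂^α f|²_{0,γ,Ω})^{1/2} and |g|_{0,γ,Ω} := sup_{x≠y} |g(x)−g(y)|/‖x−y‖₂^γ.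 -/
open Finset

/-- Partial derivative of `f : ℝ² → ℝ` in the `i`-th coordinate direction. -/
noncomputable def pdFun (i : Fin 2) (f : EuclideanSpace ℝ (Fin 2) → ℝ) :
    EuclideanSpace ℝ (Fin 2) → ℝ :=
  fun u => fderiv ℝ f u (EuclideanSpace.single i 1)

/-- Iterated partial derivative `∂^α f = ∂₁^{α₁} ∂₂^{α₂} f` for `α = (α₁, α₂)`. -/
noncomputable def pdIter (a : ℕ × ℕ) (f : EuclideanSpace ℝ (Fin 2) → ℝ) :
    EuclideanSpace ℝ (Fin 2) → ℝ :=
  (pdFun 0)^[a.1] ((pdFun 1)^[a.2] f)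

/-!
Restrict `f` to the segment `g t = f (z + t • h)`, `h = x - z`. Its `k`-th derivative is the
binomial expansion `∑_{|α| = k} binom(k, α) ∂^α f (z + t • h) hᵅ`, so the Taylor polynomial of
`f` at `z` is that of `g` at `0`, and Taylor's formula with integral remainder writes the error
as `∫₀¹ (g⁽ʳ⁾ t - g⁽ʳ⁾ 0) (1 - t)^(r-1) / (r-1)! dt`. The Hölder condition and the
Cauchy–Schwarz inequality with weights `binom(r, α)` give
`|g⁽ʳ⁾ t - g⁽ʳ⁾ 0| ≤ √(∑ binom(r, α) L_α²) ‖h‖^(r+γ) t^γ`, and the remaining Beta integral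
`∫₀¹ t^γ (1 - t)^(r-1) / (r-1)! dt = 1 / ((γ+1)⋯(γ+r))` is itself computed by Taylor's formula
for `t ↦ t^(γ+r)`.
-/

open Set Nat intervalIntegral

local notation "ℝ²" => EuclideanSpace ℝ (Fin 2)

theorem ContinuousOn.intervalIntegrable_mul_one_sub_pow_div {g : ℝ → ℝ}
    (hg : ContinuousOn g (Icc 0 1)) (n : ℕ) (c : ℝ) :
    IntervalIntegrable (fun t => g t * (1 - t) ^ n / c) MeasureTheory.volume 0 1 :=
  ContinuousOn.intervalIntegrable (by rw [Set.uIcc_of_le zero_le_one]; fun_prop)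

section TaylorIntegral

variable {G : ℕ → ℝ → ℝ}

theorem eq_sum_add_integral_of_hasDerivAt_succ {n : ℕ}
    (hG : ∀ k ≤ n, ∀ t ∈ Icc (0 : ℝ) 1, HasDerivAt (G k) (G (k + 1) t) t)
    (hcont : ContinuousOn (G (n + 1)) (Icc 0 1)) :
    G 0 1 = ∑ k ∈ range (n + 1), G k 0 / k ! +
      ∫ t in (0 : ℝ)..1, G (n + 1) t * (1 - t) ^ n / n ! := by
  set P : ℝ → ℝ := fun t => ∑ k ∈ range (n + 1), G k t * (1 - t) ^ k / (k ! : ℝ)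
  have hP : ∀ t ∈ uIcc (0 : ℝ) 1, HasDerivAt P (G (n + 1) t * (1 - t) ^ n / n !) t := by
    intro t ht
    rw [Set.uIcc_of_le zero_le_one] at ht
    set v : ℕ → ℝ := fun k => G (k + 1) t * (1 - t) ^ k / (k ! : ℝ)
    set w : ℕ → ℝ := fun k => G k t * (k * (1 - t) ^ (k - 1)) / (k ! : ℝ)
    have hterm : ∀ k ∈ range (n + 1),
        HasDerivAt (fun s => G k s * (1 - s) ^ k / (k ! : ℝ)) (v k - w k) t := by
      intro k hk
      have hpow : HasDerivAt (fun s => (1 - s) ^ k) (k * (1 - t) ^ (k - 1) * -1) t := by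
        simpa using ((hasDerivAt_id t).const_sub 1).fun_pow k
      refine (((hG k (mem_range_succ_iff.mp hk) t ht).mul hpow).div_const _).congr_deriv ?_
      simp only [v, w]
      ring
    -- the derivatives of consecutive terms of `P` cancel, leaving only `v n`
    have htelescope : ∀ k, w (k + 1) = v k := by
      intro k
      simp only [v, w, factorial_succ, cast_mul, Nat.add_sub_cancel]
      push_cast
      field_simp
    refine (HasDerivAt.fun_sum hterm).congr_deriv ?_
    rw [sum_sub_distrib, sum_range_succ, sum_range_succ' w]
    simp [htelescope, w, v]
  rw [integral_eq_sub_of_hasDerivAt hP (hcont.intervalIntegrable_mul_one_sub_pow_div n _)]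
  simp [P, sum_range_succ']

theorem sub_sum_eq_integral_sub {n : ℕ}
    (hG : ∀ k ≤ n, ∀ t ∈ Icc (0 : ℝ) 1, HasDerivAt (G k) (G (k + 1) t) t)
    (hcont : ContinuousOn (G (n + 1)) (Icc 0 1)) :
    G 0 1 - ∑ k ∈ range (n + 2), G k 0 / k ! =
      ∫ t in (0 : ℝ)..1, (G (n + 1) t - G (n + 1) 0) * (1 - t) ^ n / n ! := by
  have hkernel : ∫ t in (0 : ℝ)..1, (1 - t) ^ n = 1 / (n + 1) := by
    simp [integral_comp_sub_left (fun t => t ^ n)]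
  have hconst :
      ∫ t in (0 : ℝ)..1, G (n + 1) 0 * (1 - t) ^ n / n ! = G (n + 1) 0 / (n + 1)! := by
    simp_rw [mul_div_right_comm _ _ (n ! : ℝ)]
    rw [integral_const_mul, hkernel, factorial_succ]
    push_cast
    field_simp
  simp_rw [sub_mul, sub_div]
  rw [integral_sub (hcont.intervalIntegrable_mul_one_sub_pow_div n _)
    (continuousOn_const.intervalIntegrable_mul_one_sub_pow_div n _), hconst, sum_range_succ,
    eq_sum_add_integral_of_hasDerivAt_succ hG hcont]
  ring

theorem integral_rpow_mul_one_sub_pow_div_factorial {γ : ℝ} (hγ : 0 ≤ γ) (n : ℕ) :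
    ∫ t in (0 : ℝ)..1, t ^ γ * (1 - t) ^ n / n ! = 1 / ∏ i ∈ range (n + 1), (γ + i + 1) := by
  set G : ℕ → ℝ → ℝ := fun k t => (∏ i ∈ range k, (γ + n + 1 - i)) * t ^ (γ + n + 1 - k)
  have hG : ∀ k ≤ n, ∀ t ∈ Icc (0 : ℝ) 1, HasDerivAt (G k) (G (k + 1) t) t := by
    intro k hk t _
    have hexp : (1 : ℝ) ≤ γ + n + 1 - k := by
      have : (k : ℝ) ≤ n := by exact_mod_cast hk
      linarith
    refine ((Real.hasDerivAt_rpow_const (Or.inr hexp)).const_mul _).congr_deriv ?_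
    simp only [G, prod_range_succ]
    push_cast
    ring_nf
  have hGtop : G (n + 1) = fun t => (∏ i ∈ range (n + 1), (γ + i + 1)) * t ^ γ := by
    ext t
    simp only [G]
    congr 1
    · rw [← prod_range_reflect]
      refine prod_congr rfl fun i hi => ?_
      rw [cast_sub (by simpa [Nat.lt_succ_iff] using hi)]
      push_cast
      ring
    · push_cast
      ring_nf
  have hcont : ContinuousOn (G (n + 1)) (Icc 0 1) := by
    rw [hGtop]
    exact (continuous_const.mul (Real.continuous_rpow_const hγ)).continuousOn
  have hG0 : ∀ k ∈ range (n + 1), G k 0 / k ! = 0 := by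
    intro k hk
    have : (k : ℝ) < n + 1 := by exact_mod_cast Finset.mem_range.mp hk
    simp only [G]
    rw [Real.zero_rpow (by linarith)]
    simp
  have htaylor := eq_sum_add_integral_of_hasDerivAt_succ hG hcont
  simp only [sum_eq_zero hG0, hGtop] at htaylor
  have hK : 0 < ∏ i ∈ range (n + 1), (γ + i + 1) := prod_pos fun i _ => by positivity
  have hmul : (∏ i ∈ range (n + 1), (γ + i + 1)) *
      ∫ t in (0 : ℝ)..1, t ^ γ * (1 - t) ^ n / n ! = 1 := by
    simpa [G, mul_assoc, mul_div_assoc, integral_const_mul] using htaylor.symm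
  rw [eq_div_iff hK.ne', mul_comm, hmul]

theorem abs_sub_sum_le_of_abs_sub_le_rpow {r : ℕ} {γ M : ℝ} (hγ : 0 ≤ γ)
    (hG : ∀ k < r, ∀ t ∈ Icc (0 : ℝ) 1, HasDerivAt (G k) (G (k + 1) t) t)
    (hcont : ContinuousOn (G r) (Icc 0 1))
    (hHolder : ∀ t ∈ Icc (0 : ℝ) 1, |G r t - G r 0| ≤ M * t ^ γ) :
    |G 0 1 - ∑ k ∈ range (r + 1), G k 0 / k !| ≤ M / ∏ i ∈ range r, (γ + i + 1) := by
  cases r with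
  | zero => simpa using hHolder 1 (right_mem_Icc.mpr zero_le_one)
  | succ n =>
    rw [sub_sum_eq_integral_sub (fun k hk => hG k (Nat.lt_succ_of_le hk)) hcont,
      ← Real.norm_eq_abs, div_eq_mul_one_div, ← integral_rpow_mul_one_sub_pow_div_factorial hγ,
      ← integral_const_mul]
    refine norm_integral_le_of_norm_le zero_le_one (MeasureTheory.ae_of_all _ fun t ht => ?_)
      (Continuous.intervalIntegrable (by fun_prop) _ _)
    have hkernel : 0 ≤ (1 - t) ^ n := pow_nonneg (sub_nonneg.mpr ht.2) n
    rw [Real.norm_eq_abs, abs_div, abs_mul, abs_of_nonneg hkernel, Nat.abs_cast]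
    calc |G (n + 1) t - G (n + 1) 0| * (1 - t) ^ n / n ! ≤ M * t ^ γ * (1 - t) ^ n / n ! := by
          gcongr
          exact hHolder t (Ioc_subset_Icc_self ht)
      _ = _ := by ring

end TaylorIntegral

section PartialDerivatives

variable {Ω : Set ℝ²} {f : ℝ² → ℝ}

theorem contDiffOn_pdFun {n : WithTop ℕ∞} (hf : ContDiffOn ℝ (n + 1) f Ω)
    (hΩ : IsOpen Ω) (i : Fin 2) : ContDiffOn ℝ n (pdFun i f) Ω :=
  (hf.fderiv_of_isOpen hΩ le_rfl).clm_apply contDiffOn_const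

theorem contDiffOn_iterate_pdFun {n k : ℕ} (hf : ContDiffOn ℝ (n + k : ℕ) f Ω)
    (hΩ : IsOpen Ω) (i : Fin 2) : ContDiffOn ℝ n ((pdFun i)^[k] f) Ω := by
  induction k generalizing f with
  | zero => simpa using hf
  | succ k ih =>
    rw [Function.iterate_succ_apply]
    exact ih (contDiffOn_pdFun (by simpa [← add_assoc] using hf) hΩ i)

theorem contDiffOn_pdIter {n : ℕ} (a : ℕ × ℕ) (hf : ContDiffOn ℝ (a.1 + a.2 + n : ℕ) f Ω)
    (hΩ : IsOpen Ω) : ContDiffOn ℝ n (pdIter a f) Ω := by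
  rw [show a.1 + a.2 + n = n + a.1 + a.2 by ring] at hf
  exact contDiffOn_iterate_pdFun (contDiffOn_iterate_pdFun hf hΩ 1) hΩ 0

theorem pdFun_congr {v w : ℝ² → ℝ} (hΩ : IsOpen Ω) (h : EqOn v w Ω) (i : Fin 2) :
    EqOn (pdFun i v) (pdFun i w) Ω := fun u hu => by
  simp only [pdFun, (Filter.eventuallyEq_of_mem (hΩ.mem_nhds hu) h).fderiv_eq]

theorem pdFun_comm {w : ℝ² → ℝ} (hw : ContDiffOn ℝ 2 w Ω) (hΩ : IsOpen Ω) (i j : Fin 2) :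
    EqOn (pdFun i (pdFun j w)) (pdFun j (pdFun i w)) Ω := by
  intro u hu
  have hw2 : ContDiffAt ℝ 2 w u := hw.contDiffAt (hΩ.mem_nhds hu)
  have hd : DifferentiableAt ℝ (fderiv ℝ w) u :=
    (hw2.fderiv_right (m := 1) le_rfl).differentiableAt one_ne_zero
  have hsecond : ∀ k l : Fin 2, pdFun k (pdFun l w) u =
      fderiv ℝ (fderiv ℝ w) u (EuclideanSpace.single k 1) (EuclideanSpace.single l 1) := by
    intro k l
    show fderiv ℝ (fun v => fderiv ℝ w v (EuclideanSpace.single l 1)) u _ = _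
    simp [fderiv_clm_apply hd (differentiableAt_const _)]
  rw [hsecond, hsecond, (hw2.isSymmSndFDerivAt (by simp)).eq]

theorem pdFun_iterate_comm {w : ℝ² → ℝ} {b : ℕ} (hw : ContDiffOn ℝ (b + 1 : ℕ) w Ω)
    (hΩ : IsOpen Ω) (i j : Fin 2) :
    EqOn (pdFun j ((pdFun i)^[b] w)) ((pdFun i)^[b] (pdFun j w)) Ω := by
  induction b with
  | zero => exact fun _ _ => rfl
  | succ b ih =>
    intro u hu
    rw [Function.iterate_succ_apply', Function.iterate_succ_apply']
    have hW : ContDiffOn ℝ 2 ((pdFun i)^[b] w) Ω :=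
      contDiffOn_iterate_pdFun (n := 2) (by rwa [add_comm 2]) hΩ i
    rw [pdFun_comm hW hΩ j i hu]
    exact pdFun_congr hΩ (ih (hw.of_le (by norm_cast; omega))) i hu

theorem pdFun_zero_pdIter (a : ℕ × ℕ) :
    pdFun 0 (pdIter a f) = pdIter (a.1 + 1, a.2) f :=
  (Function.iterate_succ_apply' _ _ _).symm

theorem pdFun_one_pdIter (a : ℕ × ℕ) (hf : ContDiffOn ℝ (a.1 + a.2 + 1 : ℕ) f Ω)
    (hΩ : IsOpen Ω) : EqOn (pdFun 1 (pdIter a f)) (pdIter (a.1, a.2 + 1) f) Ω := by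
  have hV : ContDiffOn ℝ (a.1 + 1 : ℕ) ((pdFun 1)^[a.2] f) Ω :=
    contDiffOn_iterate_pdFun (by rwa [add_right_comm]) hΩ 1
  intro u hu
  rw [pdIter, pdFun_iterate_comm hV hΩ 0 1 hu, pdIter, Function.iterate_succ_apply']

theorem fderiv_apply_eq_pdFun (w : ℝ² → ℝ) (u h : ℝ²) :
    fderiv ℝ w u h = h 0 * pdFun 0 w u + h 1 * pdFun 1 w u := by
  have hbasis : h = h 0 • EuclideanSpace.single 0 1 + h 1 • EuclideanSpace.single 1 1 := by
    ext i
    fin_cases i <;> simp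
  conv_lhs => rw [hbasis]
  simp [pdFun]

theorem hasDerivAt_pdIter_add_smul {z h : ℝ²} {t : ℝ} (a : ℕ × ℕ)
    (hf : ContDiffOn ℝ (a.1 + a.2 + 1 : ℕ) f Ω) (hΩ : IsOpen Ω) (ht : z + t • h ∈ Ω) :
    HasDerivAt (fun s : ℝ => pdIter a f (z + s • h))
      (h 0 * pdIter (a.1 + 1, a.2) f (z + t • h) + h 1 * pdIter (a.1, a.2 + 1) f (z + t • h))
      t := by
  have hdiff : DifferentiableAt ℝ (pdIter a f) (z + t • h) :=
    ((contDiffOn_pdIter a hf hΩ).contDiffAt (hΩ.mem_nhds ht)).differentiableAt one_ne_zero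
  have hline : HasDerivAt (fun s : ℝ => z + s • h) h t := by
    simpa using ((hasDerivAt_id t).smul_const h).const_add z
  refine (hdiff.hasFDerivAt.comp_hasDerivAt t hline).congr_deriv ?_
  rw [fderiv_apply_eq_pdFun, pdFun_zero_pdIter, pdFun_one_pdIter a hf hΩ ht]

end PartialDerivatives

noncomputable def iteratedDerivAlong (f : ℝ² → ℝ) (z h : ℝ²) (k : ℕ) (t : ℝ) : ℝ :=
  ∑ a ∈ antidiagonal k, k.choose a.1 * (pdIter a f (z + t • h) * h 0 ^ a.1 * h 1 ^ a.2)

section IteratedDerivAlong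

variable {Ω : Set ℝ²} {f : ℝ² → ℝ} {z h : ℝ²}

theorem hasDerivAt_iteratedDerivAlong {k : ℕ} {t : ℝ} (hf : ContDiffOn ℝ (k + 1 : ℕ) f Ω)
    (hΩ : IsOpen Ω) (ht : z + t • h ∈ Ω) :
    HasDerivAt (iteratedDerivAlong f z h k) (iteratedDerivAlong f z h (k + 1) t) t := by
  set D : ℕ → ℕ → ℝ := fun i j => pdIter (i, j) f (z + t • h) * h 0 ^ i * h 1 ^ j
  have hterm : ∀ a ∈ antidiagonal k,
      HasDerivAt (fun s => k.choose a.1 * (pdIter a f (z + s • h) * h 0 ^ a.1 * h 1 ^ a.2))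
        (k.choose a.1 * (D (a.1 + 1) a.2 + D a.1 (a.2 + 1))) t := by
    intro a ha
    rw [HasAntidiagonal.mem_antidiagonal] at ha
    refine ((((hasDerivAt_pdIter_add_smul a (ha ▸ hf) hΩ ht).mul_const _).mul_const _).const_mul
      _).congr_deriv ?_
    simp only [D]
    ring
  refine (HasDerivAt.fun_sum hterm).congr_deriv ?_
  rw [iteratedDerivAlong, sum_antidiagonal_choose_succ_mul D, add_comm, ← sum_add_distrib]
  refine sum_congr rfl fun a ha => ?_
  rw [Nat.choose_symm_of_eq_add (HasAntidiagonal.mem_antidiagonal.mp ha).symm]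
  ring

theorem iteratedDerivAlong_zero (t : ℝ) :
    iteratedDerivAlong f z h 0 t = f (z + t • h) := by
  simp [iteratedDerivAlong, pdIter]

theorem continuousOn_iteratedDerivAlong {k : ℕ} (hf : ContDiffOn ℝ k f Ω) (hΩ : IsOpen Ω) :
    ContinuousOn (iteratedDerivAlong f z h k) {t | z + t • h ∈ Ω} := by
  unfold iteratedDerivAlong
  refine continuousOn_finsetSum _ fun a ha => ?_
  have hpd : ContinuousOn (pdIter a f) Ω :=
    (contDiffOn_pdIter (n := 0) a
      (by rwa [add_zero, HasAntidiagonal.mem_antidiagonal.mp ha]) hΩ).continuousOn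
  have hline : ContinuousOn (fun s : ℝ => pdIter a f (z + s • h)) {t | z + t • h ∈ Ω} :=
    hpd.comp (by fun_prop) fun _ hs => hs
  fun_prop

theorem iteratedDerivAlong_div_factorial (k : ℕ) (t : ℝ) :
    iteratedDerivAlong f z h k t / k ! = ∑ a ∈ antidiagonal k,
      pdIter a f (z + t • h) * h 0 ^ a.1 * h 1 ^ a.2 / (a.1 ! * a.2 !) := by
  rw [iteratedDerivAlong, sum_div]
  refine sum_congr rfl fun ⟨i, j⟩ hij => ?_
  obtain rfl : i + j = k := HasAntidiagonal.mem_antidiagonal.mp hij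
  have hchoose : ((i + j).choose i * i ! * j ! : ℝ) = (i + j)! := by
    have := Nat.choose_mul_factorial_mul_factorial (Nat.le_add_right i j)
    rw [Nat.add_sub_cancel_left] at this
    exact_mod_cast this
  have hC : ((i + j).choose i : ℝ) ≠ 0 :=
    Nat.cast_ne_zero.mpr (Nat.choose_pos (Nat.le_add_right i j)).ne'
  rw [← hchoose]
  field_simp

theorem sum_choose_mul_abs_pow_le_sqrt_mul_norm_pow (L : ℕ × ℕ → ℝ) (r : ℕ) :
    ∑ a ∈ antidiagonal r, r.choose a.1 * L a * |h 0| ^ a.1 * |h 1| ^ a.2 ≤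
      √(∑ a ∈ antidiagonal r, r.choose a.1 * L a ^ 2) * ‖h‖ ^ r := by
  have hbinom : ∑ a ∈ antidiagonal r, r.choose a.1 * ((h 0 ^ 2) ^ a.1 * (h 1 ^ 2) ^ a.2) =
      (‖h‖ ^ r) ^ 2 := by
    rw [← pow_mul, mul_comm, pow_mul, EuclideanSpace.real_norm_sq_eq, Fin.sum_univ_two,
      (Commute.all _ _).add_pow']
    simp_rw [nsmul_eq_mul]
  have habs (x : ℝ) (n : ℕ) : (|x| ^ n) ^ 2 = (x ^ 2) ^ n := by
    rw [← pow_mul, mul_comm, pow_mul, sq_abs]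
  have hcs := sum_sq_le_sum_mul_sum_of_sq_le_mul (antidiagonal r)
    (r := fun a => r.choose a.1 * L a * |h 0| ^ a.1 * |h 1| ^ a.2)
    (f := fun a => r.choose a.1 * L a ^ 2)
    (g := fun a => r.choose a.1 * ((h 0 ^ 2) ^ a.1 * (h 1 ^ 2) ^ a.2))
    (fun _ _ => by positivity) (fun _ _ => by positivity)
    (fun a _ => le_of_eq (by simp only [mul_pow, habs]; ring))
  rw [hbinom] at hcs
  calc _ ≤ |∑ a ∈ antidiagonal r, r.choose a.1 * L a * |h 0| ^ a.1 * |h 1| ^ a.2| := le_abs_self _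
    _ ≤ √((∑ a ∈ antidiagonal r, r.choose a.1 * L a ^ 2) * (‖h‖ ^ r) ^ 2) := Real.abs_le_sqrt hcs
    _ = _ := by rw [Real.sqrt_mul' _ (by positivity), Real.sqrt_sq (by positivity)]

theorem abs_iteratedDerivAlong_sub_le {r : ℕ} {γ s t : ℝ} {L : ℕ × ℕ → ℝ}
    (hHolder : ∀ a : ℕ × ℕ, a.1 + a.2 = r →
      ∀ u ∈ Ω, ∀ v ∈ Ω, |pdIter a f u - pdIter a f v| ≤ L a * ‖u - v‖ ^ γ)
    (hs : z + s • h ∈ Ω) (ht : z + t • h ∈ Ω) :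
    |iteratedDerivAlong f z h r s - iteratedDerivAlong f z h r t| ≤
      √(∑ a ∈ antidiagonal r, r.choose a.1 * L a ^ 2) * ‖h‖ ^ r * ‖(s - t) • h‖ ^ γ := by
  have hL : ∀ a ∈ antidiagonal r, |pdIter a f (z + s • h) - pdIter a f (z + t • h)| ≤
      L a * ‖(s - t) • h‖ ^ γ := fun a ha => by
    rw [sub_smul, ← add_sub_add_left_eq_sub _ _ z]
    exact hHolder a (HasAntidiagonal.mem_antidiagonal.mp ha) _ hs _ ht
  rw [iteratedDerivAlong, iteratedDerivAlong, ← sum_sub_distrib]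
  calc _ ≤ ∑ a ∈ antidiagonal r,
        r.choose a.1 * L a * |h 0| ^ a.1 * |h 1| ^ a.2 * ‖(s - t) • h‖ ^ γ := by
        refine (abs_sum_le_sum_abs _ _).trans (sum_le_sum fun a ha => ?_)
        rw [← mul_sub, ← sub_mul, ← sub_mul, abs_mul, abs_mul, abs_mul, abs_pow, abs_pow,
          Nat.abs_cast]
        calc _ ≤ r.choose a.1 * (L a * ‖(s - t) • h‖ ^ γ * |h 0| ^ a.1 * |h 1| ^ a.2) := by
              gcongr
              exact hL a ha
          _ = _ := by ring
    _ ≤ _ := by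
        rw [← sum_mul]
        gcongr
        exact sum_choose_mul_abs_pow_le_sqrt_mul_norm_pow L r

end IteratedDerivAlong

theorem filter_add_eq_antidiagonal {r k : ℕ} (hk : k ≤ r) :
    (range (r + 1) ×ˢ range (r + 1)).filter (fun a => a.1 + a.2 = k) = antidiagonal k := by
  ext a
  simp only [mem_filter, mem_product, Finset.mem_range, HasAntidiagonal.mem_antidiagonal]
  omega

theorem sum_filter_add_le_eq_sum_sum_antidiagonal {M : Type*} [AddCommMonoid M] (r : ℕ)
    (F : ℕ × ℕ → M) :
    ∑ a ∈ (range (r + 1) ×ˢ range (r + 1)).filter (fun a => a.1 + a.2 ≤ r), F a =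
      ∑ k ∈ range (r + 1), ∑ a ∈ antidiagonal k, F a := by
  rw [← sum_fiberwise_of_maps_to (g := fun a => a.1 + a.2) (t := range (r + 1))]
  · refine sum_congr rfl fun k hk => ?_
    have hkr := mem_range_succ_iff.mp hk
    rw [filter_filter, ← filter_add_eq_antidiagonal hkr]
    congr 1
    ext a
    simp only [mem_filter, mem_product, Finset.mem_range]
    omega
  · intro a ha
    simp only [mem_filter, mem_product, Finset.mem_range] at ha ⊢
    omega

theorem stmt_13_general (Ω : Set (EuclideanSpace ℝ (Fin 2))) (hopen : IsOpen Ω) (hconv : Convex ℝ Ω)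
    (f : EuclideanSpace ℝ (Fin 2) → ℝ) (r : ℕ) (γ : ℝ) (hγ : 0 < γ)
    (hf : ContDiffOn ℝ r f Ω) (z : EuclideanSpace ℝ (Fin 2)) (hz : z ∈ Ω)
    (L : ℕ × ℕ → ℝ)
    (hHolder : ∀ a : ℕ × ℕ, a.1 + a.2 = r →
      ∀ u ∈ Ω, ∀ v ∈ Ω, |pdIter a f u - pdIter a f v| ≤ L a * ‖u - v‖ ^ γ) :
    ∀ x ∈ Ω,
      |f x - ∑ a ∈ (Finset.range (r + 1) ×ˢ Finset.range (r + 1)).filter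
            (fun a => a.1 + a.2 ≤ r),
          pdIter a f z * (x 0 - z 0) ^ a.1 * (x 1 - z 1) ^ a.2 /
            (a.1.factorial * a.2.factorial)| ≤
        (1 / ∏ i ∈ Finset.range r, (γ + i + 1)) *
          Real.sqrt (∑ a ∈ (Finset.range (r + 1) ×ˢ Finset.range (r + 1)).filter
              (fun a => a.1 + a.2 = r), (r.choose a.1 : ℝ) * L a ^ 2) *
          ‖x - z‖ ^ ((r : ℝ) + γ) := by
  intro x hx
  set h := x - z
  have hline : ∀ t ∈ Icc (0 : ℝ) 1, z + t • h ∈ Ω := fun t ht => hconv.add_smul_sub_mem hz hx ht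
  rw [filter_add_eq_antidiagonal le_rfl]
  set S := ∑ a ∈ antidiagonal r, (r.choose a.1 : ℝ) * L a ^ 2
  have hosc : ∀ t ∈ Icc (0 : ℝ) 1,
      |iteratedDerivAlong f z h r t - iteratedDerivAlong f z h r 0| ≤
        √S * ‖h‖ ^ r * ‖h‖ ^ γ * t ^ γ := fun t ht => by
    have := abs_iteratedDerivAlong_sub_le hHolder (hline t ht) (hline 0 ⟨le_rfl, zero_le_one⟩)
    rwa [sub_zero, norm_smul, Real.norm_of_nonneg ht.1, Real.mul_rpow ht.1 (norm_nonneg _),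
      mul_comm (t ^ γ), ← mul_assoc] at this
  have hderiv : ∀ k < r, ∀ t ∈ Icc (0 : ℝ) 1, HasDerivAt (iteratedDerivAlong f z h k)
      (iteratedDerivAlong f z h (k + 1) t) t := fun k hk t ht =>
    hasDerivAt_iteratedDerivAlong (hf.of_le (Nat.cast_le.mpr hk)) hopen (hline t ht)
  have hbound := abs_sub_sum_le_of_abs_sub_le_rpow hγ.le hderiv
    ((continuousOn_iteratedDerivAlong hf hopen).mono hline) hosc
  simp_rw [iteratedDerivAlong_zero, iteratedDerivAlong_div_factorial, one_smul, zero_smul,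
    add_zero, h, add_sub_cancel, PiLp.sub_apply] at hbound
  rw [sum_filter_add_le_eq_sum_sum_antidiagonal, Real.rpow_add' (norm_nonneg _) (by positivity),
    Real.rpow_natCast]
  convert hbound using 1
  ring

/-- Taylor remainder estimate in the Hölder seminorm. If `f ∈ C^r` on the
convex open set `Ω` and each `r`-th order partial `∂^α f` is `γ`-Hölder with constant
`L α`, then `|f(x) − T_r f(x;z)| ≤ |f|_{r,γ,Ω} ‖x−z‖^{r+γ}`, where
`|f|_{r,γ,Ω} = (1/((γ+1)⋯(γ+r))) (∑_{|α|=r} binom(r,α) (L α)²)^{1/2}`. -/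
theorem stmt_13 (Ω : Set (EuclideanSpace ℝ (Fin 2))) (hopen : IsOpen Ω) (hconv : Convex ℝ Ω)
    (f : EuclideanSpace ℝ (Fin 2) → ℝ) (r : ℕ) (hr : 1 ≤ r) (γ : ℝ) (hγ : 0 < γ) (hγ1 : γ ≤ 1)
    (hf : ContDiffOn ℝ r f Ω) (z : EuclideanSpace ℝ (Fin 2)) (hz : z ∈ Ω)
    (L : ℕ × ℕ → ℝ) (hL0 : ∀ a, 0 ≤ L a)
    (hHolder : ∀ a : ℕ × ℕ, a.1 + a.2 = r →
      ∀ u ∈ Ω, ∀ v ∈ Ω, |pdIter a f u - pdIter a f v| ≤ L a * ‖u - v‖ ^ γ) :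
    ∀ x ∈ Ω,
      |f x - ∑ a ∈ (Finset.range (r + 1) ×ˢ Finset.range (r + 1)).filter
            (fun a => a.1 + a.2 ≤ r),
          pdIter a f z * (x 0 - z 0) ^ a.1 * (x 1 - z 1) ^ a.2 /
            (a.1.factorial * a.2.factorial)| ≤
        (1 / ∏ i ∈ Finset.range r, (γ + i + 1)) *
          Real.sqrt (∑ a ∈ (Finset.range (r + 1) ×ˢ Finset.range (r + 1)).filter
              (fun a => a.1 + a.2 = r), (r.choose a.1 : ℝ) * L a ^ 2) *
          ‖x - z‖ ^ ((r : ℝ) + γ) :=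
  stmt_13_general Ω hopen hconv f r γ hγ hf z hz L hHolder
end

section
/- Scaling of the fault indicator: let z ∈ ℝ², centers x₁,…,x_N ≠ z, and vector weights wⱼ exact for the gradient on affine functions at z. For h > 0 let yⱼ := z + h(xⱼ − z) and wⱼ^h := wⱼ / h. Then the denominator of the fault indicator scales as ‖∑ⱼ |wⱼ^h| ‖yⱼ − z‖₂‖₂ = ‖∑ⱼ |wⱼ| ‖xⱼ − z‖₂‖₂ (independent of h), while for a function f that is constant equal to a at the points yⱼ with j ∈ J⁺ and constant equal to b at points yⱼ with j ∈ J⁻ (a ≠ b, W := ∑_{j∈J⁺} wⱼ ≠ 0, J⁺ ∪ J⁻ = {1,…,N}), the numerator satisfies ‖∑ⱼ wⱼ^h f(yⱼ)‖₂ = |a−b| ‖W‖₂ / h. Hence the fault indicator I_∇ evaluated on the scaled configuration equals (|a−b| ‖W‖₂ / ‖∑ⱼ |wⱼ| ‖xⱼ−z‖₂‖₂) · h^{-1}, which tends to +∞ as h → 0⁺. -/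
open Finset Filter

/-!
Rescaling the stencil by `h` about `z` multiplies each distance `‖yⱼ − z‖` by `h` while the
weights are divided by `h`, so the denominator does not move. In the numerator, the weights sum
to zero (exactness on constants), so a two-valued `f` contributes only the jump:
`∑ⱼ f(yⱼ) wⱼ = a W + b (−W) = (a − b) W`, and the factor `h⁻¹` survives.
-/

theorem sum_smul_eq_sub_smul_sum_of_sum_eq_zero {ι R E : Type*} [Fintype ι] [DecidableEq ι] [CommRing R]
    [AddCommGroup E] [Module R E] (w : ι → E) (hw : ∑ j, w j = 0) (J : Finset ι)
    (g : ι → R) (a b : R) (hga : ∀ j ∈ J, g j = a) (hgb : ∀ j ∉ J, g j = b) :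
    ∑ j, g j • w j = (a - b) • ∑ j ∈ J, w j := by
  have hcompl : ∑ j ∈ Jᶜ, w j = -∑ j ∈ J, w j :=
    eq_neg_of_add_eq_zero_right ((sum_add_sum_compl J w).trans hw)
  calc ∑ j, g j • w j = ∑ j ∈ J, a • w j + ∑ j ∈ Jᶜ, b • w j := by
        rw [← sum_add_sum_compl J]
        congr 1
        · exact sum_congr rfl fun j hj => by rw [hga j hj]
        · exact sum_congr rfl fun j hj => by rw [hgb j (mem_compl.mp hj)]
    _ = (a - b) • ∑ j ∈ J, w j := by
        rw [← smul_sum, ← smul_sum, hcompl, smul_neg, sub_smul, sub_eq_add_neg]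

theorem abs_inv_mul_mul_norm_smul {E : Type*} [SeminormedAddCommGroup E] [NormedSpace ℝ E]
    {c : ℝ} (hc : c ≠ 0) (u : ℝ) (v : E) : |c⁻¹ * u| * ‖c • v‖ = |u| * ‖v‖ := by
  rw [norm_smul, abs_mul, abs_inv, Real.norm_eq_abs]
  field_simp

theorem stmt_17_general {N : ℕ} (z : EuclideanSpace ℝ (Fin 2)) (x : Fin N → EuclideanSpace ℝ (Fin 2))
    (w : Fin N → EuclideanSpace ℝ (Fin 2))
    (hexact : ∀ a : ℝ, ∀ b : Fin 2 → ℝ, ∀ m : Fin 2,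
      ∑ j, w j m * (a + b 0 * x j 0 + b 1 * x j 1) = b m)
    (h : ℝ) (hh : 0 < h)
    (y : Fin N → EuclideanSpace ℝ (Fin 2)) (hy : ∀ j, y j = z + h • (x j - z))
    (wh : Fin N → EuclideanSpace ℝ (Fin 2)) (hwh : ∀ j, wh j = h⁻¹ • w j)
    (Jplus : Finset (Fin N)) (a b : ℝ) (hab : a ≠ b)
    (W : EuclideanSpace ℝ (Fin 2)) (hWdef : W = ∑ j ∈ Jplus, w j) (hW : W ≠ 0)
    (f : EuclideanSpace ℝ (Fin 2) → ℝ)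
    (hfa : ∀ j ∈ Jplus, f (y j) = a) (hfb : ∀ j ∉ Jplus, f (y j) = b)
    (denx deny : EuclideanSpace ℝ (Fin 2))
    (hdenx : ∀ m, denx m = ∑ j, |w j m| * ‖x j - z‖)
    (hdeny : ∀ m, deny m = ∑ j, |wh j m| * ‖y j - z‖)
    (hden0 : ‖denx‖ ≠ 0) :
    ‖deny‖ = ‖denx‖ ∧
    ‖∑ j, f (y j) • wh j‖ = |a - b| * ‖W‖ / h ∧
    ‖∑ j, f (y j) • wh j‖ / ‖deny‖ = (|a - b| * ‖W‖ / ‖denx‖) * h⁻¹ ∧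
    Tendsto (fun s : ℝ => (|a - b| * ‖W‖ / ‖denx‖) * s⁻¹) (nhdsWithin 0 (Set.Ioi 0))
      atTop := by
  have hsum : ∑ j, w j = 0 := by
    ext m
    simpa using hexact 1 0 m
  have hden : deny = denx := by
    ext m
    rw [hdeny, hdenx]
    refine sum_congr rfl fun j _ => ?_
    rw [hwh, hy, add_sub_cancel_left]
    exact abs_inv_mul_mul_norm_smul hh.ne' _ _
  have hnum : ∑ j, f (y j) • wh j = h⁻¹ • ((a - b) • W) := by
    simp only [hwh, smul_comm _ h⁻¹, ← smul_sum]
    rw [hWdef, sum_smul_eq_sub_smul_sum_of_sum_eq_zero w hsum Jplus _ a b hfa hfb]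
  have hnum_norm : ‖∑ j, f (y j) • wh j‖ = |a - b| * ‖W‖ / h := by
    rw [hnum, norm_smul, norm_smul, Real.norm_eq_abs, Real.norm_eq_abs, abs_inv, abs_of_pos hh]
    ring
  refine ⟨by rw [hden], hnum_norm, by rw [hden, hnum_norm]; ring, ?_⟩
  have hab' : 0 < |a - b| := abs_pos.mpr (sub_ne_zero.mpr hab)
  have hdenx_pos : 0 < ‖denx‖ := (norm_nonneg _).lt_of_ne' hden0
  exact tendsto_inv_nhdsGT_zero.const_mul_atTop (by positivity)

/-- scaling of the fault indicator. With scaled centers `yⱼ = z + h(xⱼ−z)`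
and scaled weights `wⱼ/h`, the indicator denominator is independent of `h`, the numerator
for a two-valued `f` equals `|a−b| ‖W‖₂ / h`, the indicator equals
`(|a−b| ‖W‖₂ / ‖∑ⱼ |wⱼ| ‖xⱼ−z‖₂‖₂) h⁻¹`, and this tends to `+∞` as `h → 0⁺`. -/
theorem stmt_17 {N : ℕ} (z : EuclideanSpace ℝ (Fin 2)) (x : Fin N → EuclideanSpace ℝ (Fin 2))
    (hxz : ∀ j, x j ≠ z) (w : Fin N → EuclideanSpace ℝ (Fin 2))
    (hexact : ∀ a : ℝ, ∀ b : Fin 2 → ℝ, ∀ m : Fin 2,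
      ∑ j, w j m * (a + b 0 * x j 0 + b 1 * x j 1) = b m)
    (h : ℝ) (hh : 0 < h)
    (y : Fin N → EuclideanSpace ℝ (Fin 2)) (hy : ∀ j, y j = z + h • (x j - z))
    (wh : Fin N → EuclideanSpace ℝ (Fin 2)) (hwh : ∀ j, wh j = h⁻¹ • w j)
    (Jplus : Finset (Fin N)) (a b : ℝ) (hab : a ≠ b)
    (W : EuclideanSpace ℝ (Fin 2)) (hWdef : W = ∑ j ∈ Jplus, w j) (hW : W ≠ 0)
    (f : EuclideanSpace ℝ (Fin 2) → ℝ)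
    (hfa : ∀ j ∈ Jplus, f (y j) = a) (hfb : ∀ j ∉ Jplus, f (y j) = b)
    (denx deny : EuclideanSpace ℝ (Fin 2))
    (hdenx : ∀ m, denx m = ∑ j, |w j m| * ‖x j - z‖)
    (hdeny : ∀ m, deny m = ∑ j, |wh j m| * ‖y j - z‖)
    (hden0 : ‖denx‖ ≠ 0) :
    ‖deny‖ = ‖denx‖ ∧
    ‖∑ j, f (y j) • wh j‖ = |a - b| * ‖W‖ / h ∧
    ‖∑ j, f (y j) • wh j‖ / ‖deny‖ = (|a - b| * ‖W‖ / ‖denx‖) * h⁻¹ ∧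
    Tendsto (fun s : ℝ => (|a - b| * ‖W‖ / ‖denx‖) * s⁻¹) (nhdsWithin 0 (Set.Ioi 0))
      atTop :=
  stmt_17_general z x w hexact h hh y hy wh hwh Jplus a b hab W hWdef hW f hfa hfb denx deny hdenx
    hdeny hden0
end
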